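/- arXiv:2605.22149 — 4 statements merged into one kernel-verified Lean document; each statement's English description precedes it below -/
import Mathlib

section
/- Let X be a set, Ω a poset with greatest element ⊤, Φ : (X → Ω) → (X → Ω) monotone with respect to the pointwise order, and (P_1, P_2, …) a sequence of subsets of X. Define valuations d_n : X → Ω by d_0 = ⊤ (constant), and d_{n+1}(x) = Φ(d_n)(x) if x ∈ P_{n+1}, and d_{n+1}(x) = d_n(x) otherwise. Then for each n: d_n ⊒ d_{n+1} ⊒ Φ(d_n), and d_n ⊒ Φ^n(⊤). -/
/-- Selective Bellman update: updating only at active states stays above the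
Kleene iterates. -/
theorem stmt1 {X : Type*} {Ω : Type*} [PartialOrder Ω] [OrderTop Ω]
    (Φ : (X → Ω) → (X → Ω)) (hmono : Monotone Φ)
    (P : ℕ → Set X) (d : ℕ → X → Ω)
    (hd0 : d 0 = ⊤)
    (hdin : ∀ n x, x ∈ P (n + 1) → d (n + 1) x = Φ (d n) x)
    (hdout : ∀ n x, x ∉ P (n + 1) → d (n + 1) x = d n x) :
    ∀ n : ℕ, d (n + 1) ≤ d n ∧ Φ (d n) ≤ d (n + 1) ∧ Φ^[n] ⊤ ≤ d n := by
  have key : ∀ n : ℕ, Φ (d n) ≤ d n ∧ Φ^[n] ⊤ ≤ d n := by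
    intro n
    induction n with
    | zero => simp [hd0, le_top]
    | succ n ih =>
      obtain ⟨h1, h2⟩ := ih
      have hle : d (n + 1) ≤ d n := by
        intro x
        by_cases hx : x ∈ P (n + 1)
        · rw [hdin n x hx]; exact h1 x
        · rw [hdout n x hx]
      have hge : Φ (d n) ≤ d (n + 1) := by
        intro x
        by_cases hx : x ∈ P (n + 1)
        · rw [hdin n x hx]
        · rw [hdout n x hx]; exact h1 x
      refine ⟨le_trans (hmono hle) hge, ?_⟩
      rw [Function.iterate_succ_apply']
      exact le_trans (hmono h2) hge
  intro n
  obtain ⟨h1, h2⟩ := key n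
  have hle : d (n + 1) ≤ d n := by
    intro x
    by_cases hx : x ∈ P (n + 1)
    · rw [hdin n x hx]; exact h1 x
    · rw [hdout n x hx]
  have hge : Φ (d n) ≤ d (n + 1) := by
    intro x
    by_cases hx : x ∈ P (n + 1)
    · rw [hdin n x hx]
    · rw [hdout n x hx]; exact h1 x
  exact ⟨hle, hge, h2⟩
end

section
/- Let (X, E, w, T) be a finite weighted directed graph with nonnegative edge weights w : E → ℝ≥0 and target set T ⊆ X. Define the Bellman operator Φ on valuations d : X → [0,∞] by Φ(d)(x) = 0 if x ∈ T, and Φ(d)(x) = min over edges (x,x') ∈ E of (w(x,x') + d(x')) otherwise (with min ∅ = ∞). Then Φ is monotone, and its greatest fixed point νΦ assigns to each state x the infimum over all finite paths from x to a target state of the total weight of the path. -/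
open scoped NNReal ENNReal

/-- A path from `x` to the target set `T` along edges `E`, represented as the
list x = x_n, x_{n-1}, …, x_0 with x_0 ∈ T and consecutive states related by E. -/
def IsSPPath {X : Type*} (E : X → X → Prop) (T : Set X) (x : X) (l : List X) : Prop :=
  l ≠ [] ∧ l.head? = some x ∧ (∃ z ∈ T, l.getLast? = some z) ∧ l.Chain' E

/-- Total weight of a path: the sum of the weights of its edges. -/
noncomputable def pathWeight {X : Type*} (w : X → X → ℝ≥0) : List X → ℝ≥0∞
  | [] => 0
  | [_] => 0
  | a :: b :: l => (w a b : ℝ≥0∞) + pathWeight w (b :: l)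

/-! The infimum `d* x` of the weights of paths from `x` into `T` is a fixed point of `Φ`,
because every path from `x ∉ T` is an edge `x → y` followed by a path from `y`, and every
such concatenation is a path. Conversely, a post-fixed point `e ≤ Φ e` lies below the
weight of every path, by induction on the path: at a target state `Φ e` vanishes, and
elsewhere `e x ≤ w x y + e y` along the first edge. -/

variable {X : Type*} {E : X → X → Prop} {T : Set X} {w : X → X → ℝ≥0} {x y : X} {l : List X}

namespace IsSPPath

lemma singleton (hx : x ∈ T) : IsSPPath E T x [x] :=
  ⟨by simp, by simp, ⟨x, hx, by simp⟩, List.isChain_singleton x⟩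

lemma cons (hxy : E x y) (h : IsSPPath E T y l) : IsSPPath E T x (x :: l) := by
  obtain ⟨hne, hhead, ⟨z, hz, hlast⟩, hchain⟩ := h
  obtain ⟨_, t, rfl⟩ := List.exists_cons_of_ne_nil hne
  obtain rfl : _ = y := by simpa using hhead
  exact ⟨by simp, by simp, ⟨z, hz, by simpa using hlast⟩, List.isChain_cons_cons.2 ⟨hxy, hchain⟩⟩

lemma exists_eq_cons_cons_of_notMem (h : IsSPPath E T x l) (hx : x ∉ T) :
    ∃ y t, l = x :: y :: t ∧ E x y ∧ IsSPPath E T y (y :: t) := by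
  obtain ⟨hne, hhead, ⟨z, hz, hlast⟩, hchain⟩ := h
  match l, hne with
  | [a], _ =>
    obtain rfl : a = x := by simpa using hhead
    obtain rfl : a = z := by simpa using hlast
    exact absurd hz hx
  | a :: b :: t, _ =>
    obtain rfl : a = x := by simpa using hhead
    obtain ⟨hab, hchain⟩ := List.isChain_cons_cons.1 hchain
    exact ⟨b, t, rfl, hab, ⟨by simp, by simp, ⟨z, hz, by simpa using hlast⟩, hchain⟩⟩

end IsSPPath

variable (E T w) in
noncomputable def shortestPathWeight (x : X) : ℝ≥0∞ :=
  ⨅ l : {l : List X // IsSPPath E T x l}, pathWeight w l.1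

lemma shortestPathWeight_le_pathWeight (h : IsSPPath E T x l) :
    shortestPathWeight E T w x ≤ pathWeight w l :=
  iInf_le_of_le ⟨l, h⟩ le_rfl

lemma shortestPathWeight_eq_zero_of_mem (hx : x ∈ T) : shortestPathWeight E T w x = 0 :=
  nonpos_iff_eq_zero.1 (shortestPathWeight_le_pathWeight (IsSPPath.singleton hx))

lemma shortestPathWeight_le_add (hxy : E x y) :
    shortestPathWeight E T w x ≤ w x y + shortestPathWeight E T w y := by
  unfold shortestPathWeight
  rw [ENNReal.add_iInf]
  refine le_iInf fun ⟨l, hl⟩ => ?_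
  obtain ⟨_, t, rfl⟩ := List.exists_cons_of_ne_nil hl.1
  obtain rfl : _ = y := by simpa using hl.2.1
  exact shortestPathWeight_le_pathWeight (hl.cons hxy)

section Bellman

variable {Φ : (X → ℝ≥0∞) → (X → ℝ≥0∞)}

lemma bellman_monotone (hΦT : ∀ d x, x ∈ T → Φ d x = 0)
    (hΦE : ∀ d x, x ∉ T → Φ d x = ⨅ (y : X) (_ : E x y), ((w x y : ℝ≥0∞) + d y)) :
    Monotone Φ := by
  intro d d' hdd x
  by_cases hx : x ∈ T
  · rw [hΦT d x hx, hΦT d' x hx]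
  · rw [hΦE d x hx, hΦE d' x hx]
    exact iInf₂_mono fun y _ => add_le_add_right (hdd y) _

lemma bellman_le_add
    (hΦE : ∀ d x, x ∉ T → Φ d x = ⨅ (y : X) (_ : E x y), ((w x y : ℝ≥0∞) + d y))
    (d : X → ℝ≥0∞) (hx : x ∉ T) (hxy : E x y) : Φ d x ≤ w x y + d y := by
  rw [hΦE d x hx]
  exact iInf₂_le y hxy

lemma le_pathWeight_of_le_bellman (hΦT : ∀ d x, x ∈ T → Φ d x = 0)
    (hΦE : ∀ d x, x ∉ T → Φ d x = ⨅ (y : X) (_ : E x y), ((w x y : ℝ≥0∞) + d y))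
    {e : X → ℝ≥0∞} (he : e ≤ Φ e) (h : IsSPPath E T x l) : e x ≤ pathWeight w l := by
  induction l generalizing x with
  | nil => exact absurd rfl h.1
  | cons a t ih =>
    by_cases hx : x ∈ T
    · exact (he x).trans ((hΦT e x hx).trans_le zero_le)
    obtain ⟨y, t', hl, hxy, hy⟩ := h.exists_eq_cons_cons_of_notMem hx
    obtain ⟨hax, rfl⟩ := List.cons_eq_cons.1 hl
    subst a
    calc e x ≤ Φ e x := he x
      _ ≤ w x y + e y := bellman_le_add hΦE e hx hxy
      _ ≤ w x y + pathWeight w (y :: t') := by gcongr; exact ih hy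
      _ = pathWeight w (x :: y :: t') := rfl

lemma bellman_shortestPathWeight (hΦT : ∀ d x, x ∈ T → Φ d x = 0)
    (hΦE : ∀ d x, x ∉ T → Φ d x = ⨅ (y : X) (_ : E x y), ((w x y : ℝ≥0∞) + d y)) :
    Φ (shortestPathWeight E T w) = shortestPathWeight E T w := by
  funext x
  by_cases hx : x ∈ T
  · rw [hΦT _ x hx, shortestPathWeight_eq_zero_of_mem hx]
  refine le_antisymm (le_iInf fun ⟨l, hl⟩ => ?_) ?_
  · obtain ⟨y, t, rfl, hxy, hy⟩ := hl.exists_eq_cons_cons_of_notMem hx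
    calc Φ (shortestPathWeight E T w) x ≤ w x y + shortestPathWeight E T w y :=
          bellman_le_add hΦE _ hx hxy
      _ ≤ w x y + pathWeight w (y :: t) := by
          gcongr; exact shortestPathWeight_le_pathWeight hy
      _ = pathWeight w (x :: y :: t) := rfl
  · rw [hΦE _ x hx]
    exact le_iInf₂ fun y hxy => shortestPathWeight_le_add hxy

end Bellman

theorem stmt11_general {X : Type} (E : X → X → Prop) (w : X → X → ℝ≥0) (T : Set X)
    (Φ : (X → ℝ≥0∞) → (X → ℝ≥0∞))
    (hΦT : ∀ d x, x ∈ T → Φ d x = 0)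
    (hΦE : ∀ d x, x ∉ T → Φ d x = ⨅ (y : X) (_ : E x y), ((w x y : ℝ≥0∞) + d y)) :
    Monotone Φ ∧
      ∃ dstar : X → ℝ≥0∞, Φ dstar = dstar ∧ (∀ e, Φ e = e → e ≤ dstar) ∧
        ∀ x : X, dstar x = ⨅ l : {l : List X // IsSPPath E T x l}, pathWeight w l.1 :=
  ⟨bellman_monotone hΦT hΦE, shortestPathWeight E T w, bellman_shortestPathWeight hΦT hΦE,
    fun _ he _ => le_iInf fun l => le_pathWeight_of_le_bellman hΦT hΦE he.ge l.2,
    fun _ => rfl⟩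

/-- The Bellman operator of a finite weighted graph with nonnegative weights is
monotone, and its greatest fixed point assigns to each state the infimum of the
total weights of all finite paths from that state to a target state. -/
theorem stmt11 {X : Type} [Fintype X] (E : X → X → Prop) (w : X → X → ℝ≥0) (T : Set X)
    (Φ : (X → ℝ≥0∞) → (X → ℝ≥0∞))
    (hΦT : ∀ d x, x ∈ T → Φ d x = 0)
    (hΦE : ∀ d x, x ∉ T → Φ d x = ⨅ (y : X) (_ : E x y), ((w x y : ℝ≥0∞) + d y)) :
    Monotone Φ ∧
      ∃ dstar : X → ℝ≥0∞, Φ dstar = dstar ∧ (∀ e, Φ e = e → e ≤ dstar) ∧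
        ∀ x : X, dstar x = ⨅ l : {l : List X // IsSPPath E T x l}, pathWeight w l.1 :=
  stmt11_general E w T Φ hΦT hΦE
end

section
/- Let V be a set and G : Set → Set the functor GX = V × X. For a weighted G-graph γ : X → Bool × Pfin(V × X) on a finite set X, a transition modality σ : V × Ω → Ω on a pointed weight domain (Ω, ⊑, ξ), and the Bellman operator Φ(d)(x) = ξ ⊓ ⨅_{(a,y)∈A} σ(a, d(y)) if γ(x) = (t, A), and ⨅_{(a,y)∈A} σ(a, d(y)) if γ(x) = (f, A): for every n ∈ ℕ and x ∈ X, Φ^{n+1}(⊤)(x) equals the infimum of σ-values σ(p) over all run paths p of γ ending at x of length at most n. -/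
/-- The set of σ-values of run paths of the weighted (V × −)-graph γ ending at a
given state and of length at most n. -/
def RPvals {X V Ω : Type*} (γ : X → Bool × Finset (V × X)) (σ : V → Ω → Ω) (ξ : Ω) :
    ℕ → X → Set Ω
  | 0, x => {v | (γ x).1 = true ∧ v = ξ}
  | n + 1, x => RPvals γ σ ξ n x ∪
      {v | ∃ a y u, (a, y) ∈ (γ x).2 ∧ u ∈ RPvals γ σ ξ n y ∧ v = σ a u}

lemma RPvals_mono {X V Ω : Type*} (γ : X → Bool × Finset (V × X)) (σ : V → Ω → Ω) (ξ : Ω)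
    (n : ℕ) (x : X) : RPvals γ σ ξ n x ⊆ RPvals γ σ ξ (n + 1) x :=
  Set.subset_union_left

lemma RPvals_succ {X V Ω : Type*} (γ : X → Bool × Finset (V × X)) (σ : V → Ω → Ω) (ξ : Ω)
    (n : ℕ) (x : X) : RPvals γ σ ξ (n + 1) x = RPvals γ σ ξ 0 x ∪
      {v | ∃ a y u, (a, y) ∈ (γ x).2 ∧ u ∈ RPvals γ σ ξ n y ∧ v = σ a u} := by
  induction n generalizing x with
  | zero => rfl
  | succ n ih =>
    show RPvals γ σ ξ (n + 1) x ∪ _ = _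
    rw [ih x, Set.union_assoc]
    congr 1
    apply Set.union_eq_self_of_subset_left
    rintro v ⟨a, y, u, hA, hu, rfl⟩
    exact ⟨a, y, u, hA, RPvals_mono γ σ ξ n y hu, rfl⟩

lemma sInf_ext {V X Ω : Type*} [CompleteLinearOrder Ω] (σ : V → Ω → Ω)
    (hσ : ∀ (a : V) (B : Set Ω), σ a (sInf B) = ⨅ b ∈ B, σ a b)
    (A : Finset (V × X)) (R : X → Set Ω) :
    sInf {v | ∃ a y u, (a, y) ∈ A ∧ u ∈ R y ∧ v = σ a u} =
      ⨅ p ∈ A, σ p.1 (sInf (R p.2)) := by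
  apply le_antisymm
  · refine le_iInf₂ fun p hp => ?_
    rw [hσ]
    exact le_iInf₂ fun u hu => sInf_le ⟨p.1, p.2, u, hp, hu, rfl⟩
  · refine le_sInf ?_
    rintro v ⟨a, y, u, hA, hu, rfl⟩
    calc ⨅ p ∈ A, σ p.1 (sInf (R p.2)) ≤ σ a (sInf (R y)) := iInf₂_le (a, y) hA
    _ ≤ σ a u := by rw [hσ]; exact iInf₂_le u hu

/-- For a transition modality σ : V × Ω → Ω and a weighted (V × −)-graph γ on a
finite state space, the (n+1)-st Bellman iterate from ⊤ equals the infimum of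
σ-values of run paths of length at most n. -/
theorem stmt12 {X V Ω : Type} [Fintype X] [CompleteLinearOrder Ω]
    (γ : X → Bool × Finset (V × X)) (σ : V → Ω → Ω) (ξ : Ω)
    (hσ : ∀ (a : V) (B : Set Ω), σ a (sInf B) = ⨅ b ∈ B, σ a b)
    (Φ : (X → Ω) → (X → Ω))
    (hΦ : ∀ d x, Φ d x =
      if (γ x).1 then ξ ⊓ ⨅ p ∈ (γ x).2, σ p.1 (d p.2)
      else ⨅ p ∈ (γ x).2, σ p.1 (d p.2)) :
    ∀ (n : ℕ) (x : X), Φ^[n + 1] ⊤ x = sInf (RPvals γ σ ξ n x) := by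
  have htop : ∀ a : V, σ a ⊤ = ⊤ := by
    intro a
    simpa using hσ a ∅
  have h0 : ∀ x, sInf (RPvals γ σ ξ 0 x) = if (γ x).1 then ξ else ⊤ := by
    intro x
    cases h : (γ x).1 <;> simp [RPvals, h, sInf_eq_top]
  intro n
  induction n with
  | zero =>
    intro x
    rw [Function.iterate_one, hΦ, h0]
    cases h : (γ x).1 <;> simp [htop]
  | succ n ih =>
    intro x
    rw [Function.iterate_succ_apply', hΦ, RPvals_succ, sInf_union,
      sInf_ext σ hσ, h0]
    simp only [← ih]
    cases h : (γ x).1 <;> simp [h]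
end

section
/- In the setting of a transition modality σ : V × Ω → Ω on a pointed weight domain (Ω, ⊑, ξ) and a weighted (V×−)-graph γ on a finite set X: the greatest fixed point of the Bellman operator satisfies νΦ(x) = ⨅_{n∈ℕ} ⨅_{p ∈ RP_n(γ,x)} σ(p), the infimum of σ-values over all run paths of γ ending at x. -/
/-- The greatest fixed point of the Bellman operator of a weighted (V × −)-graph
on a finite state space equals, at each state, the infimum of σ-values over all
run paths ending at that state. -/
theorem stmt13 {X V Ω : Type} [Fintype X] [CompleteLinearOrder Ω]
    (γ : X → Bool × Finset (V × X)) (σ : V → Ω → Ω) (ξ : Ω)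
    (hσ : ∀ (a : V) (B : Set Ω), σ a (sInf B) = ⨅ b ∈ B, σ a b)
    (Φ : (X → Ω) → (X → Ω))
    (hΦ : ∀ d x, Φ d x =
      if (γ x).1 then ξ ⊓ ⨅ p ∈ (γ x).2, σ p.1 (d p.2)
      else ⨅ p ∈ (γ x).2, σ p.1 (d p.2)) :
    ∃ dstar : X → Ω, Φ dstar = dstar ∧ (∀ e, Φ e = e → e ≤ dstar) ∧
      ∀ x : X, dstar x = ⨅ n : ℕ, sInf (RPvals γ σ ξ n x) := by
  classical
  -- σ a is monotone
  have hmono : ∀ a : V, Monotone (σ a) := by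
    intro a s t hst
    have h := hσ a {s, t}
    have h1 : sInf ({s, t} : Set Ω) = s := by
      rw [sInf_pair]; exact inf_eq_left.mpr hst
    rw [h1] at h
    calc σ a s = ⨅ b ∈ ({s, t} : Set Ω), σ a b := h
      _ ≤ σ a t := iInf₂_le t (by simp)
  have hσi : ∀ (a : V) (g : ℕ → Ω), σ a (⨅ n, g n) = ⨅ n, σ a (g n) := by
    intro a g
    rw [iInf, hσ a (Set.range g), iInf_range]
  set dstar : X → Ω := fun x => ⨅ n : ℕ, sInf (RPvals γ σ ξ n x) with hd
  have hA : ∀ x, sInf (RPvals γ σ ξ 0 x) = if (γ x).1 then ξ else ⊤ := by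
    intro x
    by_cases h : (γ x).1 = true
    · have : RPvals γ σ ξ 0 x = {ξ} := by
        ext v; simp [RPvals, h]
      rw [this, sInf_singleton, if_pos h]
    · have : RPvals γ σ ξ 0 x = ∅ := by
        ext v; simp [RPvals, h]
      rw [this, sInf_empty, if_neg h]
  have hB : ∀ n x, sInf (RPvals γ σ ξ (n + 1) x)
      = sInf (RPvals γ σ ξ n x) ⊓
        ⨅ p ∈ (γ x).2, ⨅ u ∈ RPvals γ σ ξ n p.2, σ p.1 u := by
    intro n x
    have hun : RPvals γ σ ξ (n + 1) x = RPvals γ σ ξ n x ∪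
        {v | ∃ a y u, (a, y) ∈ (γ x).2 ∧ u ∈ RPvals γ σ ξ n y ∧ v = σ a u} := rfl
    rw [hun, sInf_union]
    congr 1
    apply le_antisymm
    · refine le_iInf₂ fun p hp => le_iInf₂ fun u hu => ?_
      exact sInf_le ⟨p.1, p.2, u, hp, hu, rfl⟩
    · apply le_sInf
      intro v hv
      simp only [Set.mem_setOf_eq] at hv
      obtain ⟨a, y, u, hay, hu, rfl⟩ := hv
      exact iInf₂_le_of_le (a, y) hay (iInf₂_le u hu)
  -- telescoping
  have tele : ∀ x, (⨅ n, sInf (RPvals γ σ ξ n x))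
      = sInf (RPvals γ σ ξ 0 x) ⊓
        ⨅ n, ⨅ p ∈ (γ x).2, ⨅ u ∈ RPvals γ σ ξ n p.2, σ p.1 u := by
    intro x
    apply le_antisymm
    · refine le_inf (iInf_le _ 0) (le_iInf fun n => ?_)
      exact iInf_le_of_le (n + 1) (by rw [hB]; exact inf_le_right)
    · refine le_iInf fun n => ?_
      induction n with
      | zero => exact inf_le_left
      | succ n ih =>
          rw [hB]
          exact le_inf ih (le_trans inf_le_right (iInf_le _ n))
  have hfix : ∀ x, Φ dstar x = dstar x := by
    intro x
    have ht : Φ dstar x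
        = (if (γ x).1 then ξ else ⊤) ⊓ ⨅ p ∈ (γ x).2, σ p.1 (dstar p.2) := by
      rw [hΦ]; by_cases h : (γ x).1 <;> simp [h]
    have key : ∀ p : V × X, σ p.1 (dstar p.2)
        = ⨅ n, ⨅ u ∈ RPvals γ σ ξ n p.2, σ p.1 u := by
      intro p
      have : dstar p.2 = ⨅ n, sInf (RPvals γ σ ξ n p.2) := rfl
      rw [this, hσi]
      exact iInf_congr fun n => hσ p.1 _
    have swap : (⨅ p ∈ (γ x).2, ⨅ n, ⨅ u ∈ RPvals γ σ ξ n p.2, σ p.1 u)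
        = ⨅ n, ⨅ p ∈ (γ x).2, ⨅ u ∈ RPvals γ σ ξ n p.2, σ p.1 u := by
      apply le_antisymm
      · exact le_iInf fun n => le_iInf₂ fun p hp => iInf₂_le_of_le p hp (iInf_le _ n)
      · exact le_iInf₂ fun p hp => le_iInf fun n => iInf_le_of_le n (iInf₂_le p hp)
    calc Φ dstar x = (if (γ x).1 then ξ else ⊤) ⊓ ⨅ p ∈ (γ x).2, σ p.1 (dstar p.2) := ht
      _ = sInf (RPvals γ σ ξ 0 x) ⊓
            ⨅ n, ⨅ p ∈ (γ x).2, ⨅ u ∈ RPvals γ σ ξ n p.2, σ p.1 u := by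
          rw [← hA, ← swap]
          congr 1
          exact iInf_congr fun p => iInf_congr fun _ => key p
      _ = dstar x := (tele x).symm
  -- maximality
  have hle : ∀ e, Φ e = e → ∀ (n : ℕ) (x : X), e x ≤ sInf (RPvals γ σ ξ n x) := by
    intro e he
    intro n
    induction n with
    | zero =>
        intro x
        apply le_sInf
        rintro v ⟨hx, rfl⟩
        have hex := congrFun he x
        rw [hΦ, if_pos hx] at hex
        rw [← hex]
        exact inf_le_left
    | succ n ih =>
        intro x
        apply le_sInf
        intro v hv
        have hun : RPvals γ σ ξ (n + 1) x = RPvals γ σ ξ n x ∪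
            {w | ∃ a y u, (a, y) ∈ (γ x).2 ∧ u ∈ RPvals γ σ ξ n y ∧ w = σ a u} := rfl
        rw [hun] at hv
        rcases hv with hv | ⟨a, y, u, hay, hu, rfl⟩
        · exact (ih x).trans (sInf_le hv)
        · have h1 : e x ≤ σ a (e y) := by
            have hex := congrFun he x
            rw [hΦ] at hex
            rw [← hex]
            have h2 : (⨅ p ∈ (γ x).2, σ p.1 (e p.2)) ≤ σ a (e y) :=
              iInf₂_le_of_le (a, y) hay le_rfl
            split
            · exact le_trans inf_le_right h2
            · exact h2
          exact h1.trans (hmono a ((ih y).trans (sInf_le hu)))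
  refine ⟨dstar, funext hfix, ?_, fun x => rfl⟩
  intro e he x
  exact le_iInf fun n => hle e he n x
end
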